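/- Let J_{2m} be the standard symplectic matrix and A a real 2m×2m skew-symmetric matrix with J_{2m}·A = A·J_{2m}. Let V be a real 2m×n matrix with Vᵀ V = Iₙ, y₀ ∈ ℝ^{2m}, and let z : ℝ → ℝⁿ be differentiable with z′(t) = (VᵀAV)·z(t) for all t and z(0) = Vᵀ y₀. Set y_A(t) := V·z(t). Then for all t, |½ y_A(t)ᵀ (J_{2m}⁻¹A) y_A(t)| ≤ ½ ‖y₀‖² · ‖J_{2m}⁻¹A‖₂, where ‖·‖₂ denotes the ℓ²-operator norm of a matrix and ‖y₀‖ the Euclidean norm. -/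

import Mathlib

open Matrix
open scoped RealInnerProductSpace

/-!
The projected matrix `Vᵀ A V` inherits skew-symmetry from `A`, so the projected flow conserves
`‖z‖²`. As `V` has orthonormal columns, `‖y_A(t)‖ = ‖z(t)‖ = ‖z(0)‖ = ‖Vᵀ y₀‖ ≤ ‖y₀‖`, and the
quadratic form of `J⁻¹ A` at `y_A(t)` is at most its operator norm times `‖y_A(t)‖²`.
-/

namespace Matrix

variable {k l : Type*} [Fintype k]

theorem dotProduct_mulVec_self_eq_zero_of_transpose_eq_neg {B : Matrix k k ℝ} (hB : Bᵀ = -B)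
    (x : k → ℝ) : x ⬝ᵥ B *ᵥ x = 0 := by
  have h := dotProduct_transpose_mulVec B x x
  rw [hB, neg_mulVec, dotProduct_neg] at h
  linarith

theorem transpose_transpose_mul_mul_eq_neg {B : Matrix k k ℝ} (hB : Bᵀ = -B) (V : Matrix k l ℝ) :
    (Vᵀ * B * V)ᵀ = -(Vᵀ * B * V) := by
  rw [transpose_mul, transpose_mul, transpose_transpose, hB, Matrix.neg_mul, Matrix.mul_neg,
    Matrix.mul_assoc]

theorem mulVec_dotProduct_mulVec_self [Fintype l] [DecidableEq l] {V : Matrix k l ℝ}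
    (hV : Vᵀ * V = 1) (x : l → ℝ) : V *ᵥ x ⬝ᵥ V *ᵥ x = x ⬝ᵥ x := by
  rw [← dotProduct_transpose_mulVec, mulVec_mulVec, hV, one_mulVec]

theorem transpose_mulVec_dotProduct_self_le [Fintype l] [DecidableEq l] {V : Matrix k l ℝ}
    (hV : Vᵀ * V = 1) (y : k → ℝ) : Vᵀ *ᵥ y ⬝ᵥ Vᵀ *ᵥ y ≤ y ⬝ᵥ y := by
  set u := Vᵀ *ᵥ y
  have hyu : y ⬝ᵥ V *ᵥ u = u ⬝ᵥ u := (dotProduct_transpose_mulVec V u y).symm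
  have hdist : 0 ≤ (y - V *ᵥ u) ⬝ᵥ (y - V *ᵥ u) := by
    simpa using dotProduct_self_star_nonneg (y - V *ᵥ u)
  rw [sub_dotProduct, dotProduct_sub, dotProduct_sub, dotProduct_comm (V *ᵥ u) y, hyu,
    mulVec_dotProduct_mulVec_self hV] at hdist
  linarith

theorem abs_dotProduct_mulVec_self_le [DecidableEq k] (M : Matrix k k ℝ) (v : k → ℝ) :
    |v ⬝ᵥ M *ᵥ v| ≤ ‖toEuclideanCLM (𝕜 := ℝ) M‖ * (v ⬝ᵥ v) := by
  set w : EuclideanSpace ℝ k := WithLp.toLp 2 v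
  have hnorm : ‖w‖ ^ 2 = v ⬝ᵥ v := by
    rw [← real_inner_self_eq_norm_sq, EuclideanSpace.inner_toLp_toLp, star_trivial]
  calc |v ⬝ᵥ M *ᵥ v| = |⟪w, toEuclideanCLM (𝕜 := ℝ) M w⟫| := by rw [inner_toEuclideanCLM]
    _ ≤ ‖w‖ * ‖toEuclideanCLM (𝕜 := ℝ) M w‖ := abs_real_inner_le_norm _ _
    _ ≤ ‖w‖ * (‖toEuclideanCLM (𝕜 := ℝ) M‖ * ‖w‖) := by
        gcongr; exact ContinuousLinearMap.le_opNorm _ _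
    _ = ‖toEuclideanCLM (𝕜 := ℝ) M‖ * (v ⬝ᵥ v) := by rw [← hnorm]; ring

end Matrix

theorem HasDerivAt.dotProduct {ι 𝕜 : Type*} [Fintype ι] [NontriviallyNormedField 𝕜]
    {f g : 𝕜 → ι → 𝕜} {f' g' : ι → 𝕜} {x : 𝕜} (hf : HasDerivAt f f' x)
    (hg : HasDerivAt g g' x) :
    HasDerivAt (fun t => f t ⬝ᵥ g t) (f' ⬝ᵥ g x + f x ⬝ᵥ g') x := by
  simp only [_root_.dotProduct, ← Finset.sum_add_distrib]
  exact HasDerivAt.fun_sum fun i _ => (hasDerivAt_pi.1 hf i).mul (hasDerivAt_pi.1 hg i)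

theorem dotProduct_self_eq_of_hasDerivAt_mulVec {k : Type*} [Fintype k] {B : Matrix k k ℝ}
    (hB : Bᵀ = -B) {z : ℝ → k → ℝ} (hz : ∀ t, HasDerivAt z (B *ᵥ z t) t) (t s : ℝ) :
    z t ⬝ᵥ z t = z s ⬝ᵥ z s := by
  have hderiv (r : ℝ) : HasDerivAt (fun r => z r ⬝ᵥ z r) 0 r := by
    refine ((hz r).dotProduct (hz r)).congr_deriv ?_
    rw [dotProduct_comm, ← two_mul, dotProduct_mulVec_self_eq_zero_of_transpose_eq_neg hB,
      mul_zero]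
  exact is_const_of_deriv_eq_zero (fun r => (hderiv r).differentiableAt)
    (fun r => (hderiv r).deriv) t s

theorem apm_energy_bounded_general {m n : ℕ}
    (J : Matrix (Fin m ⊕ Fin m) (Fin m ⊕ Fin m) ℝ)
    (A : Matrix (Fin m ⊕ Fin m) (Fin m ⊕ Fin m) ℝ)
    (hA : Aᵀ = -A)
    (V : Matrix (Fin m ⊕ Fin m) (Fin n) ℝ)
    (hV : Vᵀ * V = 1)
    (y₀ : (Fin m ⊕ Fin m) → ℝ)
    (z : ℝ → (Fin n → ℝ))
    (hz : ∀ t : ℝ, HasDerivAt z ((Vᵀ * A * V) *ᵥ z t) t)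
    (hz0 : z 0 = Vᵀ *ᵥ y₀)
    (yA : ℝ → ((Fin m ⊕ Fin m) → ℝ))
    (hyA : ∀ t : ℝ, yA t = V *ᵥ z t)
    (t : ℝ) :
    |(1 / 2 : ℝ) * (yA t ⬝ᵥ ((J⁻¹ * A) *ᵥ yA t))| ≤
      (1 / 2 : ℝ) * (y₀ ⬝ᵥ y₀) * ‖Matrix.toEuclideanCLM (𝕜 := ℝ) (J⁻¹ * A)‖ := by
  set normM := ‖toEuclideanCLM (𝕜 := ℝ) (J⁻¹ * A)‖
  have hconserved := dotProduct_self_eq_of_hasDerivAt_mulVec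
    (transpose_transpose_mul_mul_eq_neg hA V) hz t 0
  rw [abs_mul, abs_of_pos one_half_pos, mul_assoc, mul_comm (y₀ ⬝ᵥ y₀)]
  gcongr
  calc |yA t ⬝ᵥ (J⁻¹ * A) *ᵥ yA t| ≤ normM * (yA t ⬝ᵥ yA t) :=
        abs_dotProduct_mulVec_self_le _ _
    _ = normM * (z 0 ⬝ᵥ z 0) := by rw [hyA, mulVec_dotProduct_mulVec_self hV, hconserved]
    _ ≤ normM * (y₀ ⬝ᵥ y₀) := by
        rw [hz0]
        gcongr
        exact transpose_mulVec_dotProduct_self_le hV y₀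

/-- Bounded energy for the Arnoldi projection method: with `J` the standard
symplectic matrix, `A` skew-symmetric and commuting with `J`, `Vᵀ V = Iₙ`,
`z` solving the projected system `ż = (Vᵀ A V) z` with `z(0) = Vᵀ y₀`, and
`y_A = V z`, the energy `½ y_Aᵀ (J⁻¹ A) y_A` satisfies
`|½ y_A(t)ᵀ (J⁻¹ A) y_A(t)| ≤ ½ ‖y₀‖² ‖J⁻¹ A‖₂`, where `‖·‖₂` is the
ℓ²-operator norm (realized via `Matrix.toEuclideanCLM`). -/
theorem apm_energy_bounded {m n : ℕ}
    (J : Matrix (Fin m ⊕ Fin m) (Fin m ⊕ Fin m) ℝ)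
    (hJ : J = Matrix.fromBlocks 0 1 (-1) 0)
    (A : Matrix (Fin m ⊕ Fin m) (Fin m ⊕ Fin m) ℝ)
    (hA : Aᵀ = -A) (hJA : J * A = A * J)
    (V : Matrix (Fin m ⊕ Fin m) (Fin n) ℝ)
    (hV : Vᵀ * V = 1)
    (y₀ : (Fin m ⊕ Fin m) → ℝ)
    (z : ℝ → (Fin n → ℝ))
    (hz : ∀ t : ℝ, HasDerivAt z ((Vᵀ * A * V) *ᵥ z t) t)
    (hz0 : z 0 = Vᵀ *ᵥ y₀)
    (yA : ℝ → ((Fin m ⊕ Fin m) → ℝ))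
    (hyA : ∀ t : ℝ, yA t = V *ᵥ z t)
    (t : ℝ) :
    |(1 / 2 : ℝ) * (yA t ⬝ᵥ ((J⁻¹ * A) *ᵥ yA t))| ≤
      (1 / 2 : ℝ) * (y₀ ⬝ᵥ y₀) * ‖Matrix.toEuclideanCLM (𝕜 := ℝ) (J⁻¹ * A)‖ :=
  apm_energy_bounded_general J A hA V hV y₀ z hz hz0 yA hyA t
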